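/- Let f, g ∈ ℤ[X] with f of degree n₁, coefficients bounded in absolute value by 2^{τ₁}, and g of degree n₂, coefficients bounded by 2^{τ₂}. Let A ⊆ roots(f) be a set of complex roots of f such that g(z) ≠ 0 for all z ∈ A, and let μ(z) denote the multiplicity of z as a root of f. Then ∏_{z ∈ A} |g(z)|^{μ(z)} ≤ ((n₂+1)·2^{τ₂})^{n₁} · Mea*(f)^{n₂}, where Mea*(f) := ∏_{z root of f} max(1,|z|)^{μ(z)}. -/

import Mathlib

open Polynomial

/-- The Mahler measure of a complex polynomial without the leading coefficient
factor: ∏_{z root of f, with multiplicity} max(1,|z|). -/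
noncomputable def MeaStar (f : Polynomial ℂ) : ℝ :=
  ((f.roots.map fun z => max 1 ‖z‖).prod)

/-!
Bounding each coefficient of `g` by `2^τ₂` gives `|g(z)| ≤ (n₂+1) 2^τ₂ max(1,|z|)^{n₂}`
for every `z`. In the product over the roots of `f` lying in `A`, counted with multiplicity,
there are at most `n₁` factors, and the product of the `max(1,|z|)` over them is at most
`Mea*(f)` because each omitted factor is `≥ 1`.
-/

theorem Polynomial.norm_eval_le_of_natDegree_le {R : Type*} [SeminormedRing R]
    [NormOneClass R] {p : R[X]} {n : ℕ} {B : ℝ} (hp : p.natDegree ≤ n)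
    (hB : ∀ i, ‖p.coeff i‖ ≤ B) (z : R) :
    ‖p.eval z‖ ≤ (n + 1) * B * max 1 ‖z‖ ^ n := by
  have hB0 : 0 ≤ B := (norm_nonneg _).trans (hB 0)
  have hterm :
      ∀ i ∈ Finset.range (n + 1), ‖p.coeff i * z ^ i‖ ≤ B * max 1 ‖z‖ ^ n := by
    intro i hi
    have hzi : ‖z ^ i‖ ≤ max 1 ‖z‖ ^ n :=
      calc ‖z ^ i‖ ≤ ‖z‖ ^ i := norm_pow_le _ _
        _ ≤ max 1 ‖z‖ ^ i := pow_le_pow_left₀ (norm_nonneg z) (le_max_right _ _) i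
        _ ≤ max 1 ‖z‖ ^ n :=
          pow_le_pow_right₀ (le_max_left _ _) (Nat.lt_succ_iff.mp (Finset.mem_range.mp hi))
    exact (norm_mul_le _ _).trans (mul_le_mul (hB i) hzi (norm_nonneg _) hB0)
  calc ‖p.eval z‖ = ‖∑ i ∈ Finset.range (n + 1), p.coeff i * z ^ i‖ := by
        rw [eval_eq_sum_range' (Nat.lt_succ_of_le hp)]
    _ ≤ ∑ i ∈ Finset.range (n + 1), B * max 1 ‖z‖ ^ n :=
        (norm_sum_le _ _).trans (Finset.sum_le_sum hterm)
    _ = (n + 1) * B * max 1 ‖z‖ ^ n := by simp [mul_assoc]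

theorem Multiset.prod_map_le_prod_map_of_le {α R : Type*} [CommMonoidWithZero R] [PartialOrder R]
    [ZeroLEOneClass R] [PosMulMono R] {s t : Multiset α} (hts : t ≤ s) {f : α → R}
    (hf : ∀ a ∈ s, 1 ≤ f a) : (t.map f).prod ≤ (s.map f).prod := by
  obtain ⟨u, rfl⟩ := Multiset.le_iff_exists_add.mp hts
  rw [Multiset.map_add, Multiset.prod_add]
  refine le_mul_of_one_le_right (Multiset.prod_nonneg ?_) (Multiset.one_le_prod ?_) <;>
    rw [Multiset.forall_mem_map_iff]
  · exact fun a ha => zero_le_one.trans (hf a (Multiset.mem_add.mpr (Or.inl ha)))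
  · exact fun a ha => hf a (Multiset.mem_add.mpr (Or.inr ha))

theorem Finset.prod_pow_count_eq_prod_map_filter {α M : Type*} [DecidableEq α] [CommMonoid M]
    (s : Multiset α) (A : Finset α) (f : α → M) :
    ∏ a ∈ A, f a ^ s.count a = ((s.filter (· ∈ A)).map f).prod := by
  rw [Finset.prod_multiset_map_count]
  calc ∏ a ∈ A, f a ^ s.count a = ∏ a ∈ A, f a ^ (s.filter (· ∈ A)).count a :=
        Finset.prod_congr rfl fun a ha => by rw [Multiset.count_filter_of_pos ha]
    _ = _ := by
        refine (Finset.prod_subset (fun a ha => ?_) fun a _ ha => ?_).symm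
        · exact Multiset.of_mem_filter (Multiset.mem_toFinset.mp ha)
        · rw [Multiset.count_eq_zero_of_notMem (mt Multiset.mem_toFinset.mpr ha), pow_zero]

theorem prod_abs_eval_le_general (f g : Polynomial ℤ)
    (n₁ n₂ τ₂ : ℕ)
    (hfd : f.natDegree ≤ n₁)
    (hgd : g.natDegree ≤ n₂) (hgc : ∀ i, |g.coeff i| ≤ 2 ^ τ₂)
    (A : Finset ℂ) :
    ∏ z ∈ A, ‖(g.map (Int.castRingHom ℂ)).eval z‖ ^
        ((f.map (Int.castRingHom ℂ)).rootMultiplicity z) ≤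
      (((n₂ : ℝ) + 1) * 2 ^ τ₂) ^ n₁ * (MeaStar (f.map (Int.castRingHom ℂ))) ^ n₂ := by
  classical
  set fc := f.map (Int.castRingHom ℂ)
  set gc := g.map (Int.castRingHom ℂ)
  set C : ℝ := ((n₂ : ℝ) + 1) * 2 ^ τ₂
  set t := fc.roots.filter (· ∈ A)
  have hcoeff : ∀ i, ‖gc.coeff i‖ ≤ (2 : ℝ) ^ τ₂ := fun i => by
    simpa [gc, ← Int.cast_abs] using (Int.cast_le (R := ℝ)).mpr (hgc i)
  have hgc_deg : gc.natDegree ≤ n₂ := natDegree_map_le.trans hgd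
  have hcard : Multiset.card t ≤ n₁ :=
    (Multiset.card_le_card (Multiset.filter_le _ _)).trans
      (fc.card_roots'.trans (natDegree_map_le.trans hfd))
  have hC : 1 ≤ C := one_le_mul_of_one_le_of_one_le (by simp) (one_le_pow₀ one_le_two)
  calc ∏ z ∈ A, ‖gc.eval z‖ ^ fc.rootMultiplicity z
        = (t.map fun z => ‖gc.eval z‖).prod := by
        simp_rw [← count_roots]
        exact Finset.prod_pow_count_eq_prod_map_filter _ _ _
    _ ≤ (t.map fun z => C * max 1 ‖z‖ ^ n₂).prod :=
        Multiset.prod_map_le_prod_map₀ _ _ (fun _ _ => norm_nonneg _)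
          (fun z _ => norm_eval_le_of_natDegree_le hgc_deg hcoeff z)
    _ = C ^ Multiset.card t * (t.map fun z => max 1 ‖z‖).prod ^ n₂ := by
        rw [Multiset.prod_map_mul, Multiset.prod_map_pow, Multiset.map_const',
          Multiset.prod_replicate]
    _ ≤ C ^ n₁ * MeaStar fc ^ n₂ := by
        have hMea : (t.map fun z => max 1 ‖z‖).prod ≤ MeaStar fc :=
          Multiset.prod_map_le_prod_map_of_le (Multiset.filter_le _ _) fun _ _ => le_max_left _ _
        have hMea_nonneg : 0 ≤ (t.map fun z => max 1 ‖z‖).prod :=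
          Multiset.prod_nonneg (Multiset.forall_mem_map_iff.mpr fun _ _ => by positivity)
        gcongr

/-- For f, g ∈ ℤ[X] of magnitudes (n₁,τ₁) and (n₂,τ₂) and A a set of complex
roots of f on which g does not vanish:
∏_{z ∈ A} |g(z)|^{μ(z)} ≤ ((n₂+1)·2^{τ₂})^{n₁} · Mea*(f)^{n₂}. -/
theorem prod_abs_eval_le (f g : Polynomial ℤ) (hf : f ≠ 0) (hg : g ≠ 0)
    (n₁ n₂ τ₁ τ₂ : ℕ)
    (hfd : f.natDegree ≤ n₁) (hfc : ∀ i, |f.coeff i| ≤ 2 ^ τ₁)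
    (hgd : g.natDegree ≤ n₂) (hgc : ∀ i, |g.coeff i| ≤ 2 ^ τ₂)
    (A : Finset ℂ) (hA : ∀ z ∈ A, (f.map (Int.castRingHom ℂ)).IsRoot z)
    (hgA : ∀ z ∈ A, (g.map (Int.castRingHom ℂ)).eval z ≠ 0) :
    ∏ z ∈ A, ‖(g.map (Int.castRingHom ℂ)).eval z‖ ^
        ((f.map (Int.castRingHom ℂ)).rootMultiplicity z) ≤
      (((n₂ : ℝ) + 1) * 2 ^ τ₂) ^ n₁ * (MeaStar (f.map (Int.castRingHom ℂ))) ^ n₂ :=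
  prod_abs_eval_le_general f g n₁ n₂ τ₂ hfd hgd hgc A
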